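/- Let Γ be a graph and let w₁, …, w_m ∈ X_Γ* be a sequence of nonempty words such that there exists a perfect pairing on the index set {1, …, m}: each index i is paired with a unique index σ(i) ≠ i, σ(σ(i)) = i, satisfying (a) w_i · w_{σ(i)} ≡_Γ ε whenever i < σ(i), and (b) the pairing is non-crossing after allowing swaps: for paired (i, σ(i)) with i < σ(i), every index k with i < k < σ(i) has its partner σ(k) also in (i, σ(i)), or all letters of w_k are independent of all letters of w_i and w_{σ(i)}. Then w₁ w₂ ⋯ w_m ≡_Γ ε. -/

import Mathlib

/-- Letters `v⁺`/`v⁻` of the alphabet `X_Γ`. -/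
inductive Letter (V : Type) : Type
  | pos : V → Letter V
  | neg : V → Letter V
  deriving DecidableEq

/-- Underlying vertex of a letter. -/
def Letter.vert {V : Type} : Letter V → V
  | .pos v => v
  | .neg v => v

/-- Independence of letters induced by the adjacency relation `adj` of `Γ`:
`x I y` iff `x ≠ y` and the underlying vertices are adjacent. -/
def indep {V : Type} (adj : V → V → Prop) (x y : Letter V) : Prop :=
  x ≠ y ∧ adj x.vert y.vert

/-- A single rewriting step of the graph-monoid rewriting system:
cancel `v⁺v⁻`, cancel `v⁻v⁺` for looped `v`, or swap adjacent independent letters. -/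
inductive Step {V : Type} (adj : V → V → Prop) :
    List (Letter V) → List (Letter V) → Prop
  | cancel (a b : List (Letter V)) (v : V) :
      Step adj (a ++ [Letter.pos v, Letter.neg v] ++ b) (a ++ b)
  | cancelLoop (a b : List (Letter V)) (v : V) (h : adj v v) :
      Step adj (a ++ [Letter.neg v, Letter.pos v] ++ b) (a ++ b)
  | swap (a b : List (Letter V)) (x y : Letter V) (h : indep adj x y) :
      Step adj (a ++ [x, y] ++ b) (a ++ [y, x] ++ b)

/-- The congruence `≡_Γ` of the graph monoid `𝕄Γ`, as the equivalence closure of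
the context-closed rewriting steps. -/
def gequiv {V : Type} (adj : V → V → Prop) :
    List (Letter V) → List (Letter V) → Prop :=
  Relation.EqvGen (Step adj)

/-!
Induct on the number of words, i.e. over increasing lists of indices closed under `σ`. Let `j` be
the first index with `σ j < j` and `i = σ j`. Every index strictly between `i` and `j` is a left
endpoint whose partner lies beyond `j`, so by (b) its word commutes with `w_j`. Moving `w_j`
leftwards next to `w_i` and cancelling the pair by (a) leaves a shorter sequence satisfying the
same hypotheses.
-/

section GraphMonoid

variable {V : Type} {adj : V → V → Prop}

instance : Trans (gequiv adj) (gequiv adj) (gequiv adj) := ⟨Relation.EqvGen.trans _ _ _⟩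

theorem Step.append_context {u v : List (Letter V)} (a b : List (Letter V))
    (h : Step adj u v) : Step adj (a ++ u ++ b) (a ++ v ++ b) := by
  cases h with
  | cancel a' b' w => simpa using Step.cancel (adj := adj) (a ++ a') (b' ++ b) w
  | cancelLoop a' b' w hw => simpa using Step.cancelLoop (a ++ a') (b' ++ b) w hw
  | swap a' b' x y hxy => simpa using Step.swap (a ++ a') (b' ++ b) x y hxy

theorem gequiv_append_context {u v : List (Letter V)} (a b : List (Letter V))
    (h : gequiv adj u v) : gequiv adj (a ++ u ++ b) (a ++ v ++ b) := by
  induction h with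
  | rel _ _ hs => exact .rel _ _ (hs.append_context a b)
  | refl => exact .refl _
  | symm _ _ _ ih => exact .symm _ _ ih
  | trans _ _ _ _ _ ih₁ ih₂ => exact .trans _ _ _ ih₁ ih₂

theorem gequiv_cons_comm {x : Letter V} {v : List (Letter V)}
    (h : ∀ y ∈ v, indep adj x y) : gequiv adj (x :: v) (v ++ [x]) := by
  induction v with
  | nil => exact .refl _
  | cons y v ih =>
    calc gequiv adj (x :: y :: v) ([y] ++ (x :: v) ++ []) :=
          .rel _ _ (by simpa using Step.swap (adj := adj) [] v x y (h y (by simp)))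
      gequiv adj _ ([y] ++ (v ++ [x]) ++ []) :=
          gequiv_append_context _ _ (ih fun z hz => h z (List.mem_cons_of_mem _ hz))
      _ = (y :: v) ++ [x] := by simp

theorem gequiv_append_comm {u v : List (Letter V)}
    (h : ∀ x ∈ u, ∀ y ∈ v, indep adj x y) : gequiv adj (u ++ v) (v ++ u) := by
  induction u with
  | nil => simpa using .refl _
  | cons x u ih =>
    calc x :: u ++ v = [x] ++ (u ++ v) ++ [] := by simp
      gequiv adj _ ([x] ++ (v ++ u) ++ []) :=
          gequiv_append_context _ _ (ih fun z hz => h z (List.mem_cons_of_mem _ hz))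
      _ = [] ++ (x :: v) ++ u := by simp
      gequiv adj _ ([] ++ (v ++ [x]) ++ u) :=
          gequiv_append_context _ _ (gequiv_cons_comm (h x (by simp)))
      _ = v ++ x :: u := by simp

theorem gequiv_cancel_across {u v M : List (Letter V)} (P R : List (Letter V))
    (huv : gequiv adj (u ++ v) []) (hMv : ∀ x ∈ M, ∀ y ∈ v, indep adj x y) :
    gequiv adj (P ++ u ++ M ++ v ++ R) (P ++ M ++ R) :=
  calc P ++ u ++ M ++ v ++ R = (P ++ u) ++ (M ++ v) ++ R := by simp
    gequiv adj _ ((P ++ u) ++ (v ++ M) ++ R) :=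
        gequiv_append_context _ _ (gequiv_append_comm hMv)
    _ = P ++ (u ++ v) ++ (M ++ R) := by simp
    gequiv adj _ (P ++ [] ++ (M ++ R)) := gequiv_append_context _ _ huv
    _ = P ++ M ++ R := by simp

end GraphMonoid

section Pairing

variable {ι : Type*} {σ : ι → ι}

theorem apply_mem_remove_pair (hinv : Function.Involutive σ) {P Q R : List ι} {i : ι}
    (hnd : (P ++ i :: (Q ++ σ i :: R)).Nodup)
    (hσL : ∀ k ∈ P ++ i :: (Q ++ σ i :: R), σ k ∈ P ++ i :: (Q ++ σ i :: R)) :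
    ∀ k ∈ P ++ Q ++ R, σ k ∈ P ++ Q ++ R := by
  intro k hk
  rw [List.nodup_middle, List.nodup_cons, ← List.append_assoc, List.nodup_middle,
    List.nodup_cons] at hnd
  obtain ⟨hiL, hσiL, -⟩ := hnd
  have hkL : k ∈ P ++ i :: (Q ++ σ i :: R) := by
    simp only [List.mem_append, List.mem_cons] at hk ⊢; tauto
  have hki : k ≠ i := by
    rintro rfl
    exact hiL (by simp only [List.mem_append, List.mem_cons] at hk ⊢; tauto)
  have hkσi : k ≠ σ i := by rintro rfl; exact hσiL hk
  have hσki : σ k ≠ i := fun h => hkσi (by rw [← h, hinv k])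
  have hσkσi : σ k ≠ σ i := fun h => hki (hinv.injective h)
  have := hσL k hkL
  simp only [List.mem_append, List.mem_cons] at this ⊢
  tauto

variable [LinearOrder ι]

theorem exists_innermost_pair (hfix : ∀ i, σ i ≠ i) (hinv : Function.Involutive σ)
    {L : List ι} (hL : L.Pairwise (· < ·)) (hσL : ∀ i ∈ L, σ i ∈ L) (hne : L ≠ []) :
    ∃ P Q R i, L = P ++ i :: (Q ++ σ i :: R) ∧ i < σ i ∧
      ∀ k ∈ Q, i < k ∧ k < σ i ∧ σ i < σ k := by
  classical
  obtain ⟨x, hx⟩ := L.exists_mem_of_ne_nil hne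
  have hright : ({j ∈ L.toFinset | σ j < j} : Finset ι).Nonempty := by
    rcases (hfix x).lt_or_gt with h | h
    · exact ⟨x, by simp [hx, h]⟩
    · exact ⟨σ x, by simp [hσL x hx, hinv x, h]⟩
  obtain ⟨j, hjS, hjmin⟩ := Finset.exists_min_image _ id hright
  simp only [Finset.mem_filter, List.mem_toFinset, id] at hjS hjmin
  obtain ⟨hjL, hσj⟩ := hjS
  have hleft : ∀ k ∈ L, k < j → k < σ k := fun k hk hkj =>
    ((hfix k).symm.lt_or_gt).resolve_right fun h => (hjmin k ⟨hk, h⟩).not_gt hkj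
  set i := σ j
  have hij : σ i = j := hinv j
  obtain ⟨P, B, rfl⟩ := List.append_of_mem (hσL j hjL)
  have hL' := hL
  rw [List.pairwise_append, List.pairwise_cons] at hL'
  obtain ⟨-, ⟨hiB, hB⟩, hPB⟩ := hL'
  have hjB : j ∈ B := by
    rcases List.mem_append.1 hjL with hjP | hjB
    · exact absurd (hPB j hjP i List.mem_cons_self) (asymm hσj)
    · exact (List.mem_cons.1 hjB).resolve_left hσj.ne'
  obtain ⟨Q, R, rfl⟩ := List.append_of_mem hjB
  refine ⟨P, Q, R, i, by rw [hij], hij ▸ hσj, fun k hk => ?_⟩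
  have hkL : k ∈ P ++ i :: (Q ++ j :: R) := by simp [hk]
  have hik : i < k := hiB k (by simp [hk])
  have hkj : k < j := (List.pairwise_append.1 hB).2.2 k hk j List.mem_cons_self
  have hkσ : k < σ k := hleft k hkL hkj
  refine ⟨hik, hij ▸ hkj, hij ▸ lt_of_not_ge fun hσk => ?_⟩
  have hσk_ne : σ k ≠ j := fun h => hik.ne' (hinv.injective (h.trans hij.symm))
  have := hleft (σ k) (hσL k hkL) (lt_of_le_of_ne hσk hσk_ne)
  rw [hinv k] at this
  exact asymm hkσ this

variable {V : Type} {adj : V → V → Prop}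

theorem gequiv_flatMap_nil_of_pairing (ws : ι → List (Letter V))
    (hfix : ∀ i, σ i ≠ i) (hinv : Function.Involutive σ)
    (ha : ∀ i, i < σ i → gequiv adj (ws i ++ ws (σ i)) [])
    (hb : ∀ i k, i < σ i → i < k → k < σ i →
      ((i < σ k ∧ σ k < σ i) ∨ ∀ x ∈ ws k, ∀ y ∈ ws i ++ ws (σ i), indep adj x y))
    (L : List ι) (hL : L.Pairwise (· < ·)) (hσL : ∀ i ∈ L, σ i ∈ L) :
    gequiv adj (L.flatMap ws) [] := by
  rcases eq_or_ne L [] with rfl | hne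
  · exact .refl _
  obtain ⟨P, Q, R, i, hL_eq, hi, hQ⟩ := exists_innermost_pair hfix hinv hL hσL hne
  have hsub : (P ++ Q ++ R).Sublist L := by simp [hL_eq]
  have hrest : gequiv adj ((P ++ Q ++ R).flatMap ws) [] :=
    gequiv_flatMap_nil_of_pairing ws hfix hinv ha hb (P ++ Q ++ R) (hL.sublist hsub)
      (apply_mem_remove_pair hinv (hL_eq ▸ hL.nodup) (hL_eq ▸ hσL))
  subst hL_eq
  have hindep : ∀ x ∈ Q.flatMap ws, ∀ y ∈ ws (σ i), indep adj x y := by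
    simp only [List.mem_flatMap]
    rintro x ⟨k, hk, hx⟩ y hy
    obtain ⟨hik, hkσ, hσk⟩ := hQ k hk
    rcases hb i k hi hik hkσ with h | h
    · exact absurd h.2 hσk.not_gt
    · exact h x hx y (List.mem_append_right _ hy)
  calc (P ++ i :: (Q ++ σ i :: R)).flatMap ws
        = P.flatMap ws ++ ws i ++ Q.flatMap ws ++ ws (σ i) ++ R.flatMap ws := by simp
    gequiv adj _ (P.flatMap ws ++ Q.flatMap ws ++ R.flatMap ws) :=
        gequiv_cancel_across _ _ (ha i hi) hindep
    _ = (P ++ Q ++ R).flatMap ws := by simp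
    gequiv adj _ [] := hrest
termination_by L.length
decreasing_by simp [hL_eq]

end Pairing

theorem paired_sequence_trivial_general {V : Type} (adj : V → V → Prop)
    (m : ℕ) (ws : Fin m → List (Letter V))
    (σ : Fin m → Fin m) (hfix : ∀ i, σ i ≠ i) (hinv : ∀ i, σ (σ i) = i)
    (ha : ∀ i, i < σ i → gequiv adj (ws i ++ ws (σ i)) [])
    (hb : ∀ i k : Fin m, i < σ i → i < k → k < σ i →
      ((i < σ k ∧ σ k < σ i) ∨
        ∀ x ∈ ws k, ∀ y ∈ ws i ++ ws (σ i), indep adj x y)) :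
    gequiv adj (List.ofFn ws).flatten [] := by
  rw [List.ofFn_eq_map, ← List.flatMap_def]
  exact gequiv_flatMap_nil_of_pairing ws hfix hinv ha hb _ (List.pairwise_lt_finRange m)
    fun i _ => List.mem_finRange (σ i)

/-- if a sequence of nonempty words admits a fixed-point-free pairing
`σ` such that paired words cancel (`w_i w_{σ(i)} ≡_Γ ε`) and the pairing is
non-crossing up to independence, then the concatenation is `≡_Γ`-trivial. -/
theorem paired_sequence_trivial {V : Type} (adj : V → V → Prop)
    (m : ℕ) (ws : Fin m → List (Letter V)) (hne : ∀ i, ws i ≠ [])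
    (σ : Fin m → Fin m) (hfix : ∀ i, σ i ≠ i) (hinv : ∀ i, σ (σ i) = i)
    (ha : ∀ i, i < σ i → gequiv adj (ws i ++ ws (σ i)) [])
    (hb : ∀ i k : Fin m, i < σ i → i < k → k < σ i →
      ((i < σ k ∧ σ k < σ i) ∨
        ∀ x ∈ ws k, ∀ y ∈ ws i ++ ws (σ i), indep adj x y)) :
    gequiv adj (List.ofFn ws).flatten [] :=
  paired_sequence_trivial_general adj m ws σ hfix hinv ha hb
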